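/- Let R be a ring and h an entropy function of flows over R satisfying (A0) and (A4*). If (M,φ) is a flow over R such that φ is quasi-periodic, i.e. φ^n = φ^m for some natural numbers n > m, then h(M,φ) = 0. -/
import Mathlib


open DirectSum

/-- An invariant of algebraic flows over `R`: a function assigning to every left
`R`-module `M` and every `R`-linear endomorphism `φ` of `M` a value in `[0,∞]`. -/
abbrev FlowInvariant (R : Type) [Ring R] : Type 1 :=
  ∀ (M : Type) [AddCommGroup M] [Module R M], (M →ₗ[R] M) → ENNReal

/-- The direct sum of a family of endomorphisms, acting componentwise on `⨁ j, M j`. -/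
noncomputable def dsMap (R : Type) [Ring R] {J : Type} {M : J → Type}
    [∀ j, AddCommGroup (M j)] [∀ j, Module R (M j)]
    (φ : ∀ j, M j →ₗ[R] M j) : (⨁ j, M j) →ₗ[R] ⨁ j, M j :=
  letI := Classical.decEq J
  DirectSum.toModule R J (⨁ j, M j) fun j => (DirectSum.lof R J M j).comp (φ j)

/-- `h` is an entropy function of algebraic flows over `R`: (A1) it vanishes on zero
flows and is invariant under conjugation; (A2) for every `φ`-invariant submodule `N` of
`M`, `h (M,φ)` vanishes iff `h` vanishes on the restriction of `φ` to `N` and on the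
endomorphism induced by `φ` on `M ⧸ N`; (A3) `h` vanishes on a direct sum of flows iff
it vanishes on every summand. -/
def IsFlowEntropyFunction (R : Type) [Ring R] (h : FlowInvariant R) : Prop :=
  (∀ (M : Type) [AddCommGroup M] [Module R M] (φ : M →ₗ[R] M),
      Subsingleton M → h M φ = 0) ∧
  (∀ (M : Type) [AddCommGroup M] [Module R M] (N : Type) [AddCommGroup N] [Module R N]
      (φ : M →ₗ[R] M) (ψ : N →ₗ[R] N) (σ : M ≃ₗ[R] N),
      (∀ x : M, σ (φ x) = ψ (σ x)) → h M φ = h N ψ) ∧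
  (∀ (M : Type) [AddCommGroup M] [Module R M] (φ : M →ₗ[R] M) (N : Submodule R M)
      (hN : ∀ x ∈ N, φ x ∈ N),
      h M φ = 0 ↔
        h ↥N (φ.restrict hN) = 0 ∧
        h (M ⧸ N) (Submodule.mapQ N N φ (fun x hx => hN x hx)) = 0) ∧
  (∀ (J : Type) (M : J → Type) [∀ j, AddCommGroup (M j)] [∀ j, Module R (M j)]
      (φ : ∀ j, M j →ₗ[R] M j),
      h (⨁ j, M j) (dsMap R φ) = 0 ↔ ∀ j, h (M j) (φ j) = 0)

/-- Axiom (A0): `h` vanishes on every zero endomorphism and on every identity. -/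
def FlowA0 (R : Type) [Ring R] (h : FlowInvariant R) : Prop :=
  ∀ (M : Type) [AddCommGroup M] [Module R M],
    h M (0 : M →ₗ[R] M) = 0 ∧ h M (LinearMap.id : M →ₗ[R] M) = 0

/-- Axiom (A4*), the logarithmic law: `h (M, φ^n) = n * h (M, φ)` for every `n ≥ 1`. -/
def FlowA4Star (R : Type) [Ring R] (h : FlowInvariant R) : Prop :=
  ∀ (M : Type) [AddCommGroup M] [Module R M] (φ : M →ₗ[R] M) (n : ℕ), 1 ≤ n →
    h M (φ ^ n) = (n : ENNReal) * h M φ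

/-- If `h` is an entropy function of flows over `R` satisfying (A0) and (A4*), and `φ`
is quasi-periodic (`φ^n = φ^m` for some `n > m`), then `h (M, φ) = 0`. -/
theorem entropy_eq_zero_of_quasiPeriodic (R : Type) [Ring R] (h : FlowInvariant R)
    (H : IsFlowEntropyFunction R h) (H0 : FlowA0 R h) (H4 : FlowA4Star R h)
    (M : Type) [AddCommGroup M] [Module R M] (φ : M →ₗ[R] M)
    (n m : ℕ) (hmn : m < n) (hqp : φ ^ n = φ ^ m) :
    h M φ = 0 := by
  obtain ⟨Hsub, Hconj, HA2, HA3⟩ := H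
  rcases Nat.eq_zero_or_pos m with hm0 | hm
  · -- m = 0 : φ ^ n = id
    subst hm0
    have hid : φ ^ n = LinearMap.id := by rw [hqp, pow_zero, Module.End.one_eq_id]
    have := H4 M φ n hmn
    rw [hid, (H0 M).2] at this
    rcases mul_eq_zero.mp this.symm with h1 | h1
    · exact absurd h1 (by exact_mod_cast (show n ≠ 0 by omega))
    · exact h1
  · set N : Submodule R M := LinearMap.ker (φ ^ m) with hNdef
    have hN : ∀ x ∈ N, φ x ∈ N := by
      intro x hx
      have : (φ ^ m) (φ x) = φ ((φ ^ m) x) := by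
        rw [← Module.End.mul_apply, ← Module.End.mul_apply, ← pow_succ, ← pow_succ']
      simp only [hNdef, LinearMap.mem_ker] at hx ⊢
      rw [this, hx, map_zero]
    rw [HA2 M φ N hN]
    constructor
    · -- restriction is nilpotent of order m
      have hrest : (φ.restrict hN) ^ m = 0 := by
        rw [Module.End.pow_restrict m hN]
        ext x
        simp only [LinearMap.restrict_apply, LinearMap.zero_apply,
          ZeroMemClass.coe_zero]
        exact x.2
      have := H4 ↥N (φ.restrict hN) m hm
      rw [hrest, (H0 ↥N).1] at this
      rcases mul_eq_zero.mp this.symm with h1 | h1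
      · exact absurd h1 (by exact_mod_cast hm.ne')
      · exact h1
    · set ψ := Submodule.mapQ N N φ (fun x hx => hN x hx) with hψdef
      have hle : N ≤ N.comap φ := fun x hx => hN x hx
      have hker : ∀ x : M, (φ ^ (m + 1)) x = 0 → (φ ^ m) x = 0 := by
        intro x hx
        have h1 : (φ ^ m) x = (φ ^ n) x := by rw [hqp]
        rw [h1, show n = (n - (m + 1)) + (m + 1) by omega, pow_add,
          Module.End.mul_apply, hx, map_zero]
      have hinj : Function.Injective ψ := by
        refine LinearMap.ker_eq_bot.mp ((Submodule.eq_bot_iff _).mpr ?_)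
        intro x hx
        obtain ⟨y, rfl⟩ := Submodule.Quotient.mk_surjective N x
        rw [LinearMap.mem_ker, hψdef, Submodule.mapQ_apply,
          Submodule.Quotient.mk_eq_zero] at hx
        have h1 : (φ ^ (m + 1)) y = 0 := by
          rw [pow_succ, Module.End.mul_apply]
          exact LinearMap.mem_ker.mp hx
        exact (Submodule.Quotient.mk_eq_zero N).mpr (hker y h1)
      have hpow : ∀ k : ℕ, ψ ^ k = Submodule.mapQ N N (φ ^ k)
          (N.le_comap_pow_of_le_comap hle k) := by
        intro k
        rw [hψdef, ← Submodule.mapQ_pow N hle k]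
      have hkey : ψ ^ (n - m) = LinearMap.id := by
        have hinjm : Function.Injective (ψ ^ m) := by
          intro a b hab
          rw [Module.End.pow_apply, Module.End.pow_apply] at hab
          exact hinj.iterate m hab
        refine LinearMap.ext fun x => ?_
        apply hinjm
        have h1 : (ψ ^ m) ((ψ ^ (n - m)) x) = (ψ ^ n) x := by
          rw [← Module.End.mul_apply, ← pow_add, show m + (n - m) = n by omega]
        rw [h1, hpow n, hpow m]
        obtain ⟨y, rfl⟩ := Submodule.Quotient.mk_surjective N x
        simp only [LinearMap.id_apply, Submodule.mapQ_apply, hqp]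
      have := H4 (M ⧸ N) ψ (n - m) (by omega)
      rw [hkey, (H0 (M ⧸ N)).2] at this
      rcases mul_eq_zero.mp this.symm with h1 | h1
      · exact absurd h1 (by
          have : n - m ≠ 0 := by omega
          exact_mod_cast this)
      · exact h1
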